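/- arXiv:1402.4448 — 2 statements merged into one kernel-verified Lean document; each statement's English description precedes it below -/
import Mathlib

section
/- Fix u, v ∈ ℕ. Let G ∈ ℚ[[t]] be the formal power series whose coefficient of t^n is the number of n-step walks in the line model starting at (u,v) (with arbitrary endpoint). Then (1−p)²·(1+p^(u+v+2))·G = (1+p²)·(1−p^(u+1))·(1−p^(v+1)) in ℚ[[t]]. -/
/-!
A line-model walk never leaves the antidiagonal `x + y = m` through its starting point, so it
is a walk on the path `{0, …, m}`. Writing `F k` for the generating function of walks from
`(k, m - k)` (and `F k = 0` off the path), splitting off the first step gives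
`F k = 1 + t (F (k + 1) + F (k - 1))` for `0 ≤ k ≤ m`. Up to the factor
`(1 - p)² (1 + p^(m+2))`, the family `(1 + p²) (1 - p^(k+1)) (1 - p^(m-k+1))` solves the same
system, because `p = t (1 + p²)`, and it vanishes at `k = -1` and `k = m + 1`. Such a system has
at most one solution, since the difference of two solutions is divisible by every power of `t`.
-/

open scoped Classical

/-- The step-set of the line model. -/
def lineSteps : Finset (ℤ × ℤ) := {(1,-1), (-1,1)}

/-- Position after `i` steps of the walk with step sequence `s` starting at `start`. -/
def linePos (start : ℤ × ℤ) {n : ℕ} (s : Fin n → ℤ × ℤ) (i : ℕ) : ℤ × ℤ :=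
  start + ∑ j ∈ Finset.univ.filter (fun j : Fin n => (j : ℕ) < i), s j

/-- `n`-step walks of the line model starting at `start`, encoded by their step sequences:
every step lies in `{(1,-1),(-1,1)}` and every intermediate point lies in ℕ². -/
noncomputable def lineWalks (start : ℤ × ℤ) (n : ℕ) : Finset (Fin n → ℤ × ℤ) :=
  (Fintype.piFinset fun _ : Fin n => lineSteps).filter
    (fun s => ∀ i ≤ n, 0 ≤ (linePos start s i).1 ∧ 0 ≤ (linePos start s i).2)

namespace PowerSeries

variable {R ι : Type*} [CommRing R]

theorem eq_zero_of_forall_eq_X_mul_mem_span (D : ι → R⟦X⟧)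
    (hD : ∀ i, ∃ E ∈ Submodule.span R (Set.range D), D i = X * E) : D = 0 := by
  suffices h : ∀ n i, coeff n (D i) = 0 by
    funext i; ext n; simpa using h n i
  intro n
  induction n with
  | zero =>
    intro i
    obtain ⟨E, -, hE⟩ := hD i
    rw [hE, coeff_zero_X_mul]
  | succ n ih =>
    intro i
    obtain ⟨E, hE_mem, hE⟩ := hD i
    have hspan : Submodule.span R (Set.range D) ≤ LinearMap.ker (coeff (R := R) n) :=
      Submodule.span_le.2 (Set.range_subset_iff.2 ih)
    rw [hE, coeff_succ_X_mul]
    exact hspan hE_mem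

end PowerSeries

open PowerSeries

section Walks

variable {start : ℤ × ℤ}

lemma linePos_zero {n : ℕ} (s : Fin n → ℤ × ℤ) : linePos start s 0 = start := by
  simp [linePos]

lemma linePos_succ {n : ℕ} (s : Fin (n + 1) → ℤ × ℤ) (i : ℕ) :
    linePos start s (i + 1) = linePos (start + s 0) (Fin.tail s) i := by
  unfold linePos
  rw [Finset.sum_filter, Finset.sum_filter, Fin.sum_univ_succ]
  simp [Fin.tail, add_assoc]

lemma mem_lineWalks {n : ℕ} {s : Fin n → ℤ × ℤ} :
    s ∈ lineWalks start n ↔ (∀ j, s j ∈ lineSteps) ∧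
      ∀ i ≤ n, 0 ≤ (linePos start s i).1 ∧ 0 ≤ (linePos start s i).2 := by
  simp [lineWalks, Fintype.mem_piFinset]

lemma lineWalks_eq_empty (h : ¬ (0 ≤ start.1 ∧ 0 ≤ start.2)) (n : ℕ) :
    lineWalks start n = ∅ := by
  ext s
  simp only [mem_lineWalks, Finset.notMem_empty, iff_false, not_and]
  intro _ hpos
  exact h (by simpa [linePos_zero] using hpos 0 n.zero_le)

lemma card_lineWalks_zero (h : 0 ≤ start.1 ∧ 0 ≤ start.2) : (lineWalks start 0).card = 1 := by
  rw [Finset.card_eq_one]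
  refine ⟨Fin.elim0,
    Finset.eq_singleton_iff_unique_mem.2 ⟨?_, fun _ _ => Subsingleton.elim _ _⟩⟩
  refine mem_lineWalks.2 ⟨fun j => j.elim0, fun i hi => ?_⟩
  obtain rfl : i = 0 := Nat.le_zero.1 hi
  simpa [linePos_zero] using h

lemma card_lineWalks_succ_filter_head {a : ℤ × ℤ} (ha : a ∈ lineSteps)
    (h : 0 ≤ start.1 ∧ 0 ≤ start.2) (n : ℕ) :
    ((lineWalks start (n + 1)).filter (fun s => s 0 = a)).card
      = (lineWalks (start + a) n).card := by
  refine Finset.card_bij' (fun s _ => Fin.tail s) (fun t _ => Fin.cons a t) ?_ ?_ ?_ ?_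
  · intro s hs
    simp only [Finset.mem_filter, mem_lineWalks] at hs
    obtain ⟨⟨hsteps, hpos⟩, rfl⟩ := hs
    refine mem_lineWalks.2 ⟨fun j => hsteps j.succ, fun i hi => ?_⟩
    rw [← linePos_succ]
    exact hpos (i + 1) (Nat.succ_le_succ hi)
  · intro t ht
    obtain ⟨hsteps, hpos⟩ := mem_lineWalks.1 ht
    simp only [Finset.mem_filter, mem_lineWalks, Fin.cons_zero, and_true]
    refine ⟨Fin.cases ha hsteps, fun i hi => ?_⟩
    cases i with
    | zero => simpa [linePos_zero] using h
    | succ i =>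
      rw [linePos_succ, Fin.cons_zero, Fin.tail_cons]
      exact hpos i (Nat.succ_le_succ_iff.1 hi)
  · intro s hs
    rw [← (Finset.mem_filter.1 hs).2]
    exact Fin.cons_self_tail s
  · intro t _
    exact Fin.tail_cons (α := fun _ => ℤ × ℤ) a t

lemma card_lineWalks_succ (h : 0 ≤ start.1 ∧ 0 ≤ start.2) (n : ℕ) :
    (lineWalks start (n + 1)).card = ∑ a ∈ lineSteps, (lineWalks (start + a) n).card := by
  rw [Finset.card_eq_sum_card_fiberwise fun s hs => (mem_lineWalks.1 hs).1 0]
  exact Finset.sum_congr rfl fun a ha => card_lineWalks_succ_filter_head ha h n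

end Walks

noncomputable def antidiagWalkSeries (m : ℕ) (k : ℤ) : PowerSeries ℚ :=
  mk fun n => ((lineWalks (k, (m : ℤ) - k) n).card : ℚ)

-- The truncated exponents `Int.toNat` make this vanish exactly when `k < 0` or `m < k`.
noncomputable def antidiagClosedForm (p : PowerSeries ℚ) (m : ℕ) (k : ℤ) : PowerSeries ℚ :=
  (1 + p ^ 2) * (1 - p ^ (k + 1).toNat) * (1 - p ^ ((m : ℤ) - k + 1).toNat)

section Antidiagonal

variable (m : ℕ) {k : ℤ}

lemma antidiagWalkSeries_eq_zero (h : k < 0 ∨ (m : ℤ) < k) : antidiagWalkSeries m k = 0 := by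
  ext n
  rw [antidiagWalkSeries, coeff_mk, lineWalks_eq_empty (by omega), Finset.card_empty,
    Nat.cast_zero, map_zero]

lemma antidiagClosedForm_eq_zero (p : PowerSeries ℚ) (h : k < 0 ∨ (m : ℤ) < k) :
    antidiagClosedForm p m k = 0 := by
  rcases h with h | h
  · simp [antidiagClosedForm, show (k + 1).toNat = 0 by omega]
  · simp [antidiagClosedForm, show ((m : ℤ) - k + 1).toNat = 0 by omega]

lemma antidiagWalkSeries_rec (h0 : 0 ≤ k) (hm : k ≤ m) :
    antidiagWalkSeries m k
      = 1 + X * (antidiagWalkSeries m (k + 1) + antidiagWalkSeries m (k - 1)) := by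
  have hstart : 0 ≤ (k, (m : ℤ) - k).1 ∧ 0 ≤ (k, (m : ℤ) - k).2 := ⟨h0, by simp [hm]⟩
  ext n
  cases n with
  | zero => simp [antidiagWalkSeries, card_lineWalks_zero hstart]
  | succ n =>
    have hsteps : ∑ a ∈ lineSteps, (lineWalks ((k, (m : ℤ) - k) + a) n).card
        = (lineWalks (k + 1, (m : ℤ) - (k + 1)) n).card
          + (lineWalks (k - 1, (m : ℤ) - (k - 1)) n).card := by
      rw [lineSteps, Finset.sum_pair (by decide)]
      congr 3 <;> ext <;> simp <;> ring
    simp only [antidiagWalkSeries, coeff_mk, map_add, coeff_succ_X_mul, coeff_one,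
      card_lineWalks_succ hstart, hsteps]
    simp

lemma antidiagClosedForm_rec (p : PowerSeries ℚ) (hp : p = X * (1 + p ^ 2))
    (h0 : 0 ≤ k) (hm : k ≤ m) :
    antidiagClosedForm p m k = (1 - p) ^ 2 * (1 + p ^ (m + 2))
      + X * (antidiagClosedForm p m (k + 1) + antidiagClosedForm p m (k - 1)) := by
  obtain ⟨a, rfl⟩ := Int.eq_ofNat_of_zero_le h0
  obtain ⟨b, rfl⟩ := Nat.exists_eq_add_of_le (Int.ofNat_le.1 hm)
  simp only [antidiagClosedForm, show ((a : ℤ) + 1).toNat = a + 1 by omega,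
    show (((a + b : ℕ) : ℤ) - a + 1).toNat = b + 1 by omega,
    show ((a : ℤ) + 1 + 1).toNat = a + 2 by omega,
    show (((a + b : ℕ) : ℤ) - (a + 1) + 1).toNat = b by omega,
    show ((a : ℤ) - 1 + 1).toNat = a by omega,
    show (((a + b : ℕ) : ℤ) - (a - 1) + 1).toNat = b + 2 by omega]
  linear_combination ((1 - p ^ (a + 2)) * (1 - p ^ b) + (1 - p ^ a) * (1 - p ^ (b + 2))) * hp

theorem mul_antidiagWalkSeries_eq_antidiagClosedForm (p : PowerSeries ℚ)
    (hp : p = X * (1 + p ^ 2)) (k : ℤ) :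
    (1 - p) ^ 2 * (1 + p ^ (m + 2)) * antidiagWalkSeries m k = antidiagClosedForm p m k := by
  set D : ℤ → PowerSeries ℚ := fun k =>
    (1 - p) ^ 2 * (1 + p ^ (m + 2)) * antidiagWalkSeries m k - antidiagClosedForm p m k
  suffices D = 0 from sub_eq_zero.1 (congrFun this k)
  refine eq_zero_of_forall_eq_X_mul_mem_span D fun k => ?_
  by_cases hk : 0 ≤ k ∧ k ≤ m
  · refine ⟨D (k + 1) + D (k - 1), Submodule.add_mem _ (Submodule.subset_span ⟨_, rfl⟩)
      (Submodule.subset_span ⟨_, rfl⟩), ?_⟩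
    simp only [D]
    rw [antidiagWalkSeries_rec m hk.1 hk.2, antidiagClosedForm_rec m p hp hk.1 hk.2]
    ring
  · refine ⟨0, Submodule.zero_mem _, ?_⟩
    simp [D, antidiagWalkSeries_eq_zero m (by omega : k < 0 ∨ (m : ℤ) < k),
      antidiagClosedForm_eq_zero m p (by omega : k < 0 ∨ (m : ℤ) < k)]

end Antidiagonal

theorem line_gf_general (u v : ℕ) (p : PowerSeries ℚ)
    (hp : p = PowerSeries.X * (1 + p ^ 2)) :
    (1 - p) ^ 2 * (1 + p ^ (u + v + 2)) *
        (PowerSeries.mk fun n => ((lineWalks ((u : ℤ), (v : ℤ)) n).card : ℚ))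
      = (1 + p ^ 2) * (1 - p ^ (u + 1)) * (1 - p ^ (v + 1)) := by
  have hstart : ((u : ℤ), (v : ℤ)) = ((u : ℤ), ((u + v : ℕ) : ℤ) - u) := by
    congr 1; push_cast; ring
  have hform : antidiagClosedForm p (u + v) u
      = (1 + p ^ 2) * (1 - p ^ (u + 1)) * (1 - p ^ (v + 1)) := by
    rw [antidiagClosedForm, show ((u : ℤ) + 1).toNat = u + 1 by omega,
      show (((u + v : ℕ) : ℤ) - u + 1).toNat = v + 1 by omega]
  rw [hstart, ← hform, ← mul_antidiagWalkSeries_eq_antidiagClosedForm (u + v) p hp]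
  rfl

/-- The generating function counting line-model walks starting at
`(u,v)` with arbitrary endpoint. -/
theorem line_gf (u v : ℕ) (p : PowerSeries ℚ)
    (hp0 : PowerSeries.constantCoeff p = 0)
    (hp : p = PowerSeries.X * (1 + p ^ 2)) :
    (1 - p) ^ 2 * (1 + p ^ (u + v + 2)) *
        (PowerSeries.mk fun n => ((lineWalks ((u : ℤ), (v : ℤ)) n).card : ℚ))
      = (1 + p ^ 2) * (1 - p ^ (u + 1)) * (1 - p ^ (v + 1)) :=
  line_gf_general u v p hp
end

section
/- Fix u, v, w ∈ ℕ and weights α, β ∈ ℚ. Let G ∈ ℚ[[t]] be the formal power series whose coefficient of t^n is the total weight of all n-step walks in the triangle model starting at (u,v,w), and let A, B, C ∈ ℚ[[t]] be the analogous series restricted to walks whose endpoint has first, second, respectively third, coordinate equal to 0. Then (1 − 3·(α+β)·t)·G = 1 − (α+β)·t·(A+B+C) in ℚ[[t]]. -/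
open scoped Classical

/-- The directed sublattice step-set Ω′. -/
def OmegaA : Finset (ℤ × ℤ × ℤ) := {(1,0,-1), (-1,1,0), (0,-1,1)}

/-- The directed sublattice step-set Ω″. -/
def OmegaB : Finset (ℤ × ℤ × ℤ) := {(1,-1,0), (-1,0,1), (0,1,-1)}

/-- The full step-set Ω₂ = Ω′ ∪ Ω″ of the triangle model. -/
def OmegaFull : Finset (ℤ × ℤ × ℤ) := OmegaA ∪ OmegaB

/-- Position after `i` steps of the walk with step sequence `s` starting at `start`. -/
def triPos (start : ℤ × ℤ × ℤ) {n : ℕ} (s : Fin n → ℤ × ℤ × ℤ) (i : ℕ) : ℤ × ℤ × ℤ :=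
  start + ∑ j ∈ Finset.univ.filter (fun j : Fin n => (j : ℕ) < i), s j

/-- All three coordinates nonnegative. -/
def nonneg3 (v : ℤ × ℤ × ℤ) : Prop := 0 ≤ v.1 ∧ 0 ≤ v.2.1 ∧ 0 ≤ v.2.2

/-- `n`-step walks of the triangle model starting at `start`, encoded by their step
sequences: every step lies in Ω₂ and every intermediate point lies in ℕ³. -/
noncomputable def triWalks (start : ℤ × ℤ × ℤ) (n : ℕ) : Finset (Fin n → ℤ × ℤ × ℤ) :=
  (Fintype.piFinset fun _ : Fin n => OmegaFull).filter
    (fun s => ∀ i ≤ n, nonneg3 (triPos start s i))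

/-- Number of steps of the walk lying in Ω′. -/
noncomputable def countA {n : ℕ} (s : Fin n → ℤ × ℤ × ℤ) : ℕ :=
  (Finset.univ.filter fun j => s j ∈ OmegaA).card

/-- Number of steps of the walk lying in Ω″. -/
noncomputable def countB {n : ℕ} (s : Fin n → ℤ × ℤ × ℤ) : ℕ :=
  (Finset.univ.filter fun j => s j ∈ OmegaB).card

/-!
Appending a step `x` to an `n`-step walk ending at `p` gives an `(n+1)`-step walk exactly when
`p + x ∈ ℕ³`. Each coordinate is lowered by exactly one step of Ω′ and one step of Ω″, so the
admissible steps from `p` have total weight `3(α+β) - (α+β)·#{zero coordinates of p}`. Summing over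
all `n`-step walks gives `G_{n+1} = 3(α+β) G_n - (α+β)(A_n + B_n + C_n)` with `G_0 = 1`, which is the
coefficientwise form of the identity.
-/

open PowerSeries in
lemma PowerSeries.one_sub_C_mul_X_mul_eq {R : Type*} [CommRing R] {a b : R} {F G : R⟦X⟧}
    (h0 : constantCoeff F = 1)
    (hsucc : ∀ n, coeff (n + 1) F = a * coeff n F - b * coeff n G) :
    (1 - C a * X) * F = 1 - C b * X * G := by
  ext (_ | n)
  · simp [h0]
  · simp [sub_mul, mul_assoc, coeff_succ_X_mul, hsucc]

lemma triPos_snoc_of_le (start : ℤ × ℤ × ℤ) {n : ℕ} (p : Fin n → ℤ × ℤ × ℤ) (x : ℤ × ℤ × ℤ)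
    {i : ℕ} (hi : i ≤ n) : triPos start (Fin.snoc p x) i = triPos start p i := by
  simp [triPos, Finset.sum_filter, Fin.sum_univ_castSucc, hi.not_gt]

lemma triPos_snoc_self (start : ℤ × ℤ × ℤ) {n : ℕ} (p : Fin n → ℤ × ℤ × ℤ) (x : ℤ × ℤ × ℤ) :
    triPos start (Fin.snoc p x) (n + 1) = triPos start p n + x := by
  simp [triPos, Finset.sum_filter, Fin.sum_univ_castSucc, add_assoc]

lemma nonneg3_triPos_of_mem_triWalks {start : ℤ × ℤ × ℤ} {n : ℕ} {s : Fin n → ℤ × ℤ × ℤ}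
    (hs : s ∈ triWalks start n) {i : ℕ} (hi : i ≤ n) : nonneg3 (triPos start s i) :=
  (Finset.mem_filter.1 hs).2 i hi

lemma snoc_mem_triWalks_iff {start : ℤ × ℤ × ℤ} {n : ℕ} {p : Fin n → ℤ × ℤ × ℤ}
    {x : ℤ × ℤ × ℤ} :
    Fin.snoc p x ∈ triWalks start (n + 1) ↔
      p ∈ triWalks start n ∧ x ∈ OmegaFull ∧ nonneg3 (triPos start p n + x) := by
  simp only [triWalks, Finset.mem_filter, Fintype.mem_piFinset, Fin.forall_fin_succ',
    Fin.snoc_castSucc, Fin.snoc_last]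
  constructor
  · rintro ⟨⟨hp, hx⟩, hpos⟩
    refine ⟨⟨hp, fun i hi => ?_⟩, hx, ?_⟩
    · rw [← triPos_snoc_of_le start p x hi]
      exact hpos i (Nat.le_succ_of_le hi)
    · rw [← triPos_snoc_self]
      exact hpos _ le_rfl
  · rintro ⟨⟨hp, hpos⟩, hx, hlast⟩
    refine ⟨⟨hp, hx⟩, fun i hi => ?_⟩
    rcases Nat.le_succ_iff.1 hi with hi | rfl
    · rw [triPos_snoc_of_le start p x hi]
      exact hpos i hi
    · rwa [triPos_snoc_self]

lemma card_filter_snoc_mem {α : Type*} [DecidableEq α] {n : ℕ} (p : Fin n → α) (x : α)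
    (S : Finset α) :
    (Finset.univ.filter fun j => Fin.snoc (α := fun _ => α) p x j ∈ S).card
      = (Finset.univ.filter fun j => p j ∈ S).card + if x ∈ S then 1 else 0 := by
  rw [Finset.card_filter, Finset.card_filter, Fin.sum_univ_castSucc]
  simp only [Fin.snoc_castSucc, Fin.snoc_last]

lemma disjoint_OmegaA_OmegaB : Disjoint OmegaA OmegaB := by decide

section
variable {R : Type*} [CommRing R]

def stepWeight (α β : R) (x : ℤ × ℤ × ℤ) : R := if x ∈ OmegaA then α else β

noncomputable def walkWeight (α β : R) {n : ℕ} (s : Fin n → ℤ × ℤ × ℤ) : R :=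
  α ^ countA s * β ^ countB s

lemma walkWeight_snoc (α β : R) {n : ℕ} (p : Fin n → ℤ × ℤ × ℤ) {x : ℤ × ℤ × ℤ}
    (hx : x ∈ OmegaFull) :
    walkWeight α β (Fin.snoc p x) = walkWeight α β p * stepWeight α β x := by
  rw [walkWeight, walkWeight, countA, countB, countA, countB, card_filter_snoc_mem,
    card_filter_snoc_mem, stepWeight]
  by_cases hA : x ∈ OmegaA
  · simp [hA, Finset.disjoint_left.1 disjoint_OmegaA_OmegaB hA, pow_succ]
    ring
  · have hB : x ∈ OmegaB := (Finset.mem_union.1 hx).resolve_left hA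
    simp [hA, hB, pow_succ]
    ring

lemma sum_stepWeight_admissible (α β : R) {p : ℤ × ℤ × ℤ} (hp : nonneg3 p) :
    ∑ x ∈ OmegaFull with nonneg3 (p + x), stepWeight α β x
      = (α + β) * (3 - ((if p.1 = 0 then 1 else 0) + (if p.2.1 = 0 then 1 else 0)
          + (if p.2.2 = 0 then 1 else 0))) := by
  obtain ⟨a, b, c⟩ := p
  obtain ⟨ha, hb, hc⟩ : 0 ≤ a ∧ 0 ≤ b ∧ 0 ≤ c := hp
  have hOmega : OmegaFull =
      {(1, 0, -1), (-1, 1, 0), (0, -1, 1), (1, -1, 0), (-1, 0, 1), (0, 1, -1)} := by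
    decide
  have hlower : ∀ t : ℤ, 0 ≤ t → (0 ≤ t + -1 ↔ ¬ t = 0) := by omega
  rw [Finset.sum_filter, hOmega]
  simp [Finset.sum_insert, nonneg3, stepWeight, OmegaA, ha, hb, hc, hlower, (by omega : 0 ≤ a + 1),
    (by omega : 0 ≤ b + 1), (by omega : 0 ≤ c + 1)]
  split_ifs <;> ring

lemma sum_walkWeight_triWalks_succ_eq_sum_mul (α β : R) (start : ℤ × ℤ × ℤ) (n : ℕ) :
    ∑ s ∈ triWalks start (n + 1), walkWeight α β s
      = ∑ p ∈ triWalks start n, walkWeight α β p *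
          ∑ x ∈ OmegaFull with nonneg3 (triPos start p n + x), stepWeight α β x := by
  simp_rw [Finset.mul_sum]
  rw [Finset.sum_sigma']
  symm
  refine Finset.sum_nbij' (fun q => Fin.snoc q.1 q.2) (fun s => ⟨Fin.init s, s (Fin.last n)⟩)
    ?_ ?_ ?_ ?_ ?_
  · rintro ⟨p, x⟩ hq
    rw [Finset.mem_sigma, Finset.mem_filter] at hq
    exact snoc_mem_triWalks_iff.2 ⟨hq.1, hq.2⟩
  · intro s hs
    rw [← Fin.snoc_init_self s, snoc_mem_triWalks_iff] at hs
    simpa using hs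
  · rintro ⟨p, x⟩ _
    simp
  · intro s _
    exact Fin.snoc_init_self s
  · rintro ⟨p, x⟩ hq
    rw [Finset.mem_sigma, Finset.mem_filter] at hq
    exact (walkWeight_snoc α β p hq.2.1).symm

lemma sum_walkWeight_triWalks_succ (α β : R) (start : ℤ × ℤ × ℤ) (n : ℕ) :
    ∑ s ∈ triWalks start (n + 1), walkWeight α β s
      = 3 * (α + β) * ∑ s ∈ triWalks start n, walkWeight α β s
        - (α + β) * (∑ s ∈ triWalks start n with (triPos start s n).1 = 0, walkWeight α β s
          + ∑ s ∈ triWalks start n with (triPos start s n).2.1 = 0, walkWeight α β s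
          + ∑ s ∈ triWalks start n with (triPos start s n).2.2 = 0, walkWeight α β s) := by
  rw [sum_walkWeight_triWalks_succ_eq_sum_mul, Finset.sum_filter, Finset.sum_filter,
    Finset.sum_filter, ← Finset.sum_add_distrib, ← Finset.sum_add_distrib, Finset.mul_sum,
    Finset.mul_sum, ← Finset.sum_sub_distrib]
  refine Finset.sum_congr rfl fun s hs => ?_
  rw [sum_stepWeight_admissible α β (nonneg3_triPos_of_mem_triWalks hs le_rfl)]
  split_ifs <;> ring

lemma sum_walkWeight_triWalks_zero (α β : R) {start : ℤ × ℤ × ℤ} (h : nonneg3 start) :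
    ∑ s ∈ triWalks start 0, walkWeight α β s = 1 := by
  simp [triWalks, walkWeight, countA, countB, triPos, h]

end

/-- Relation between the full weighted generating function of
triangle-model walks starting at `(u,v,w)` and those ending on the boundary. -/
theorem triangle_full_vs_boundary_gf (u v w : ℕ) (α β : ℚ) :
    (1 - PowerSeries.C (3 * (α + β)) * PowerSeries.X) *
        (PowerSeries.mk fun n =>
          ∑ s ∈ triWalks ((u : ℤ), (v : ℤ), (w : ℤ)) n, α ^ countA s * β ^ countB s)
      = 1 - PowerSeries.C (α + β) * PowerSeries.X *
          ((PowerSeries.mk fun n =>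
              ∑ s ∈ (triWalks ((u : ℤ), (v : ℤ), (w : ℤ)) n).filter
                  (fun s => (triPos ((u : ℤ), (v : ℤ), (w : ℤ)) s n).1 = 0),
                α ^ countA s * β ^ countB s) +
            (PowerSeries.mk fun n =>
              ∑ s ∈ (triWalks ((u : ℤ), (v : ℤ), (w : ℤ)) n).filter
                  (fun s => (triPos ((u : ℤ), (v : ℤ), (w : ℤ)) s n).2.1 = 0),
                α ^ countA s * β ^ countB s) +
            (PowerSeries.mk fun n =>
              ∑ s ∈ (triWalks ((u : ℤ), (v : ℤ), (w : ℤ)) n).filter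
                  (fun s => (triPos ((u : ℤ), (v : ℤ), (w : ℤ)) s n).2.2 = 0),
                α ^ countA s * β ^ countB s)) := by
  have hstart : nonneg3 ((u : ℤ), (v : ℤ), (w : ℤ)) := by simp [nonneg3]
  refine PowerSeries.one_sub_C_mul_X_mul_eq ?_ fun n => ?_
  · rw [← PowerSeries.coeff_zero_eq_constantCoeff_apply, PowerSeries.coeff_mk]
    exact sum_walkWeight_triWalks_zero α β hstart
  · simp only [PowerSeries.coeff_mk, map_add]
    exact sum_walkWeight_triWalks_succ α β _ n
end
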